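/- arXiv:2106.09172 — 2 statements merged into one kernel-verified Lean document; each statement's English description precedes it below -/
import Mathlib

section
/- Let η = Σ_{k,l≥0} A_{k,l} x^k y^l dx + Σ_{k,l≥0} B_{k,l} x^k y^l dy be a holomorphic one-form germ at 0 ∈ ℂ², given by convergent power series. Fix x₀ ≠ 0 and for c ≠ 0 let γ_c(s) = (x₀ e^{is}, c x₀^{-1} e^{-is}), s ∈ [0, 2π]. Then ∮_{γ_c} η = 2πi Σ_{k≥0} (A_{k,k+1} − B_{k+1,k}) c^{k+1}. In particular, ∮_{γ_c} η = 0 for all c ≠ 0 near 0 if and only if A_{k,k+1} = B_{k+1,k} for all k ≥ 0. -/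
open Complex Real

/-- The line integral of `η = Σ A_{k,l} x^k y^l dx + Σ B_{k,l} x^k y^l dy`
along `γ_c(s) = (x₀ e^{is}, c x₀⁻¹ e^{-is})`. -/
noncomputable def period8 (A B : ℕ → ℕ → ℂ) (x₀ c : ℂ) : ℂ :=
  ∫ s in (0:ℝ)..(2 * Real.pi),
    ((∑' p : ℕ × ℕ, A p.1 p.2 * (x₀ * Complex.exp (Complex.I * s)) ^ p.1 *
        (c * x₀⁻¹ * Complex.exp (-(Complex.I * s))) ^ p.2) *
      (Complex.I * x₀ * Complex.exp (Complex.I * s)) +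
    (∑' p : ℕ × ℕ, B p.1 p.2 * (x₀ * Complex.exp (Complex.I * s)) ^ p.1 *
        (c * x₀⁻¹ * Complex.exp (-(Complex.I * s))) ^ p.2) *
      (-(Complex.I * c * x₀⁻¹ * Complex.exp (-(Complex.I * s)))))


open MeasureTheory
open scoped ENNReal NNReal

lemma coeff_zero_of_tsum_zero (D : ℕ → ℂ) (ε : ℝ) (hε : 0 < ε)
    (hs : ∀ c : ℂ, ‖c‖ < ε → Summable (fun k => ‖D k‖ * ‖c‖ ^ (k + 1)))
    (hz : ∀ c : ℂ, c ≠ 0 → ‖c‖ < ε → ∑' k : ℕ, D k * c ^ (k + 1) = 0) :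
    ∀ k, D k = 0 := by
  have hε2 : (0:ℝ) ≤ ε / 2 := by linarith
  set Ec : ℕ → ℂ := fun n => Nat.rec 0 (fun m _ => D m) n with hEc
  have hEc0 : Ec 0 = 0 := rfl
  have hEcs : ∀ n, Ec (n + 1) = D n := fun n => rfl
  set f : ℂ → ℂ := fun z => ∑' k : ℕ, D k * z ^ (k + 1) with hf
  have hsum : ∀ y : ℂ, ‖y‖ < ε → Summable (fun k => D k * y ^ (k + 1)) := by
    intro y hy
    refine Summable.of_norm ?_
    have := hs y hy
    simpa [norm_mul, norm_pow] using this
  set r : ℝ≥0 := ⟨ε/2, hε2⟩ with hr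
  have hrr : (r : ℝ) = ε / 2 := rfl
  have hsum2 : Summable fun n => ‖(FormalMultilinearSeries.ofScalars ℂ Ec) n‖ * (r : ℝ) ^ n := by
    have h1 : Summable (fun n : ℕ => ‖Ec (n + 1)‖ * (r : ℝ) ^ (n + 1)) := by
      have hnorm : ‖((ε/2 : ℝ) : ℂ)‖ < ε := by
        rw [Complex.norm_real, Real.norm_of_nonneg hε2]; linarith
      have h2 := hs ((ε/2 : ℝ) : ℂ) hnorm
      simp only [Complex.norm_real, Real.norm_of_nonneg hε2] at h2
      exact h2
    have h3 : Summable (fun n : ℕ => ‖Ec n‖ * (r : ℝ) ^ n) := by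
      rw [← summable_nat_add_iff 1]; exact h1
    refine h3.congr fun n => ?_
    rw [FormalMultilinearSeries.ofScalars_norm]
  have hball : HasFPowerSeriesOnBall f (FormalMultilinearSeries.ofScalars ℂ Ec) 0
      (ENNReal.ofReal (ε/2)) := by
    constructor
    · rw [ENNReal.ofReal_eq_coe_nnreal hε2]
      exact FormalMultilinearSeries.le_radius_of_summable_norm _ hsum2
    · simp [hε]
    · intro y hy
      rw [EMetric.mem_ball, edist_zero_right] at hy
      have hy' : ‖y‖ < ε / 2 := by
        rwa [← ofReal_norm, ENNReal.ofReal_lt_ofReal_iff (by linarith)] at hy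
      have hyε : ‖y‖ < ε := by linarith
      simp only [zero_add]
      have h1 : HasSum (fun k => D k * y ^ (k + 1)) (f y) := (hsum y hyε).hasSum
      have h2 : HasSum (fun n => Ec n * y ^ n) (f y) := by
        have h4 := (hasSum_nat_add_iff (f := fun n => Ec n * y ^ n) 1).mp
          (h1.congr_fun fun n => by rw [hEcs])
        simpa [hEc0] using h4
      refine h2.congr_fun fun n => ?_
      rw [FormalMultilinearSeries.ofScalars_apply_eq, smul_eq_mul]
  have hev : f =ᶠ[nhds 0] 0 := by
    filter_upwards [Metric.ball_mem_nhds (0:ℂ) hε] with z hz'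
    rw [Metric.mem_ball, dist_zero_right] at hz'
    rcases eq_or_ne z 0 with rfl | hz0
    · simp [hf]
    · exact hz z hz0 hz'
  have hzero := hball.hasFPowerSeriesAt.eq_zero_of_eventually hev
  have hEcz : Ec = 0 := (FormalMultilinearSeries.ofScalars_series_eq_zero ℂ).mp hzero
  intro k
  have := congrFun hEcz (k + 1)
  simpa [hEcs] using this

lemma integral_cexp_int (m : ℤ) :
    ∫ s in (0:ℝ)..(2 * Real.pi), Complex.exp (m * (Complex.I * s)) =
      if m = 0 then (2 * Real.pi : ℂ) else 0 := by
  rcases eq_or_ne m 0 with rfl | hm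
  · simp
  · rw [if_neg hm]
    have h : ∀ s : ℝ, (m : ℂ) * (Complex.I * s) = ((m : ℂ) * Complex.I) * s := by
      intro s; ring
    simp_rw [h]
    rw [integral_exp_mul_complex (by simp [Complex.ext_iff, hm])]
    have : ((m : ℂ) * Complex.I) * (2 * Real.pi : ℝ) = m * (2 * Real.pi * Complex.I) := by
      push_cast; ring
    rw [this, Complex.exp_int_mul_two_pi_mul_I]
    simp

lemma diag_injective : Function.Injective (fun k : ℕ => ((k, k + 1) : ℕ × ℕ)) :=
  fun a b h => by simpa using congrArg Prod.fst h

lemma diag_injective' : Function.Injective (fun k : ℕ => ((k + 1, k) : ℕ × ℕ)) :=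
  fun a b h => by simpa using congrArg Prod.snd h

lemma aux1 (a x c : ℝ) (hx : x ≠ 0) (k : ℕ) :
    a * x ^ k * (c / x) ^ (k+1) * x = a * c ^ (k+1) := by
  rw [div_pow, show a * x ^ k * (c ^ (k+1) / x ^ (k+1)) * x
      = a * c ^ (k+1) * (x ^ (k+1) / x ^ (k+1)) from by rw [pow_succ]; ring,
    div_self (pow_ne_zero _ hx), mul_one]

lemma aux2 (a x c : ℝ) (hx : x ≠ 0) (k : ℕ) :
    a * x ^ (k+1) * (c / x) ^ k * (x⁻¹ * c) = a * c ^ (k+1) := by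
  rw [div_pow, show a * x ^ (k+1) * (c ^ k / x ^ k) * (x⁻¹ * c)
      = a * c ^ (k+1) * (x ^ (k+1) * (x ^ (k+1))⁻¹) from by
        rw [pow_succ, pow_succ]; field_simp,
    mul_inv_cancel₀ (pow_ne_zero _ hx), mul_one]

lemma diagSummableNorm (A : ℕ → ℕ → ℂ) (x₀ c : ℂ) (hx₀ : x₀ ≠ 0)
    (hA : Summable (fun p : ℕ × ℕ => ‖A p.1 p.2‖ * ‖x₀‖ ^ p.1 * (‖c‖ / ‖x₀‖) ^ p.2)) :
    Summable (fun k : ℕ => ‖A k (k + 1)‖ * ‖c‖ ^ (k + 1)) := by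
  have hx : ‖x₀‖ ≠ 0 := norm_ne_zero_iff.mpr hx₀
  have h := (hA.comp_injective diag_injective).mul_right ‖x₀‖
  refine h.congr fun k => ?_
  exact aux1 _ _ _ hx k

lemma diagSummableNorm' (B : ℕ → ℕ → ℂ) (x₀ c : ℂ) (hx₀ : x₀ ≠ 0)
    (hB : Summable (fun p : ℕ × ℕ => ‖B p.1 p.2‖ * ‖x₀‖ ^ p.1 * (‖c‖ / ‖x₀‖) ^ p.2)) :
    Summable (fun k : ℕ => ‖B (k + 1) k‖ * ‖c‖ ^ (k + 1)) := by
  have hx : ‖x₀‖ ≠ 0 := norm_ne_zero_iff.mpr hx₀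
  have h := ((hB.comp_injective diag_injective').mul_right (‖x₀‖⁻¹ * ‖c‖))
  refine h.congr fun k => ?_
  exact aux2 _ _ _ hx k

lemma diagSummable (A : ℕ → ℕ → ℂ) (c : ℂ)
    (h : Summable (fun k : ℕ => ‖A k (k + 1)‖ * ‖c‖ ^ (k + 1))) :
    Summable (fun k : ℕ => A k (k + 1) * c ^ (k + 1)) :=
  Summable.of_norm (h.congr fun k => by rw [norm_mul, norm_pow])

lemma diagSummable' (B : ℕ → ℕ → ℂ) (c : ℂ)
    (h : Summable (fun k : ℕ => ‖B (k + 1) k‖ * ‖c‖ ^ (k + 1))) :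
    Summable (fun k : ℕ => B (k + 1) k * c ^ (k + 1)) :=
  Summable.of_norm (h.congr fun k => by rw [norm_mul, norm_pow])

lemma periodEq (A B : ℕ → ℕ → ℂ) (x₀ c : ℂ) (hx₀ : x₀ ≠ 0)
    (hA : Summable (fun p : ℕ × ℕ => ‖A p.1 p.2‖ * ‖x₀‖ ^ p.1 * (‖c‖ / ‖x₀‖) ^ p.2))
    (hB : Summable (fun p : ℕ × ℕ => ‖B p.1 p.2‖ * ‖x₀‖ ^ p.1 * (‖c‖ / ‖x₀‖) ^ p.2)) :
    period8 A B x₀ c =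
      2 * Real.pi * Complex.I *
        ((∑' k : ℕ, A k (k + 1) * c ^ (k + 1)) - ∑' k : ℕ, B (k + 1) k * c ^ (k + 1)) := by
  have hx : ‖x₀‖ ≠ 0 := norm_ne_zero_iff.mpr hx₀
  have h2pi : (0:ℝ) ≤ 2 * Real.pi := by positivity
  set FA : ℕ × ℕ → ℝ → ℂ := fun p s =>
    A p.1 p.2 * (x₀ * Complex.exp (Complex.I * s)) ^ p.1 *
      (c * x₀⁻¹ * Complex.exp (-(Complex.I * s))) ^ p.2 *
      (Complex.I * x₀ * Complex.exp (Complex.I * s)) with hFA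
  set FB : ℕ × ℕ → ℝ → ℂ := fun p s =>
    B p.1 p.2 * (x₀ * Complex.exp (Complex.I * s)) ^ p.1 *
      (c * x₀⁻¹ * Complex.exp (-(Complex.I * s))) ^ p.2 *
      (-(Complex.I * c * x₀⁻¹ * Complex.exp (-(Complex.I * s)))) with hFB
  have hnu : ∀ s : ℝ, ‖Complex.exp (Complex.I * s)‖ = 1 := by
    intro s; simp [Complex.norm_exp]
  have hnv : ∀ s : ℝ, ‖Complex.exp (-(Complex.I * s))‖ = 1 := by
    intro s; simp [Complex.norm_exp]
  have hFAnorm : ∀ p (s : ℝ), ‖FA p s‖ =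
      ‖A p.1 p.2‖ * ‖x₀‖ ^ p.1 * (‖c‖ / ‖x₀‖) ^ p.2 * ‖x₀‖ := by
    intro p s
    simp only [hFA, norm_mul, norm_pow, norm_inv, hnu s, hnv s, Complex.norm_I,
      norm_div]
    rw [div_eq_mul_inv]
    ring
  have hFBnorm : ∀ p (s : ℝ), ‖FB p s‖ =
      ‖B p.1 p.2‖ * ‖x₀‖ ^ p.1 * (‖c‖ / ‖x₀‖) ^ p.2 * (‖c‖ / ‖x₀‖) := by
    intro p s
    simp only [hFB, norm_mul, norm_pow, norm_inv, norm_neg, hnu s, hnv s, Complex.norm_I]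
    rw [div_eq_mul_inv]
    ring
  -- summability in ℂ for each s
  have hSA : ∀ s : ℝ, Summable (fun p => FA p s) := fun s =>
    Summable.of_norm (((hA.mul_right ‖x₀‖)).congr fun p => (hFAnorm p s).symm)
  have hSB : ∀ s : ℝ, Summable (fun p => FB p s) := fun s =>
    Summable.of_norm (((hB.mul_right (‖c‖ / ‖x₀‖))).congr fun p => (hFBnorm p s).symm)
  have hcontA : ∀ p : ℕ × ℕ, Continuous (fun s : ℝ => FA p s) := by
    intro p; simp only [hFA]; fun_prop
  have hcontB : ∀ p : ℕ × ℕ, Continuous (fun s : ℝ => FB p s) := by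
    intro p; simp only [hFB]; fun_prop
  -- integrand as a single tsum
  have hint : ∀ s : ℝ,
      ((∑' p : ℕ × ℕ, A p.1 p.2 * (x₀ * Complex.exp (Complex.I * s)) ^ p.1 *
          (c * x₀⁻¹ * Complex.exp (-(Complex.I * s))) ^ p.2) *
        (Complex.I * x₀ * Complex.exp (Complex.I * s)) +
      (∑' p : ℕ × ℕ, B p.1 p.2 * (x₀ * Complex.exp (Complex.I * s)) ^ p.1 *
          (c * x₀⁻¹ * Complex.exp (-(Complex.I * s))) ^ p.2) *
        (-(Complex.I * c * x₀⁻¹ * Complex.exp (-(Complex.I * s))))) =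
      ∑' p : ℕ × ℕ, (FA p s + FB p s) := by
    intro s
    rw [← tsum_mul_right, ← tsum_mul_right]
    exact (Summable.tsum_add (hSA s) (hSB s)).symm
  -- step 1 : reduce to set integral of the tsum
  have step1 : period8 A B x₀ c = ∫ s in Set.Ioc (0:ℝ) (2 * Real.pi),
      ∑' p : ℕ × ℕ, (FA p s + FB p s) := by
    rw [period8, intervalIntegral.integral_of_le h2pi]
    exact integral_congr_ae (Filter.Eventually.of_forall fun s => hint s)
  -- step 2 : interchange integral and sum
  have hIntOn : ∀ p : ℕ × ℕ,
      IntegrableOn (fun s => FA p s + FB p s) (Set.Ioc (0:ℝ) (2 * Real.pi)) volume :=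
    fun p => ((hcontA p).add (hcontB p)).integrableOn_Ioc
  have hbound : ∀ p : ℕ × ℕ, ∫ s in Set.Ioc (0:ℝ) (2 * Real.pi), ‖FA p s + FB p s‖ ≤
      (‖A p.1 p.2‖ * ‖x₀‖ ^ p.1 * (‖c‖ / ‖x₀‖) ^ p.2 * ‖x₀‖ +
        ‖B p.1 p.2‖ * ‖x₀‖ ^ p.1 * (‖c‖ / ‖x₀‖) ^ p.2 * (‖c‖ / ‖x₀‖)) * (2 * Real.pi) := by
    intro p
    have hle : ∀ s : ℝ, ‖FA p s + FB p s‖ ≤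
        ‖A p.1 p.2‖ * ‖x₀‖ ^ p.1 * (‖c‖ / ‖x₀‖) ^ p.2 * ‖x₀‖ +
          ‖B p.1 p.2‖ * ‖x₀‖ ^ p.1 * (‖c‖ / ‖x₀‖) ^ p.2 * (‖c‖ / ‖x₀‖) := by
      intro s
      calc ‖FA p s + FB p s‖ ≤ ‖FA p s‖ + ‖FB p s‖ := norm_add_le _ _
      _ = _ := by rw [hFAnorm p s, hFBnorm p s]
    calc ∫ s in Set.Ioc (0:ℝ) (2 * Real.pi), ‖FA p s + FB p s‖
        ≤ ∫ _ in Set.Ioc (0:ℝ) (2 * Real.pi),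
          (‖A p.1 p.2‖ * ‖x₀‖ ^ p.1 * (‖c‖ / ‖x₀‖) ^ p.2 * ‖x₀‖ +
            ‖B p.1 p.2‖ * ‖x₀‖ ^ p.1 * (‖c‖ / ‖x₀‖) ^ p.2 * (‖c‖ / ‖x₀‖)) := by
          refine integral_mono_of_nonneg (Filter.Eventually.of_forall fun s => norm_nonneg _)
            ((integrableOn_const_iff).mpr (Or.inr ?_)) (Filter.Eventually.of_forall fun s => hle s)
          rw [Real.volume_Ioc]
          exact ENNReal.ofReal_lt_top
      _ = _ := by
          rw [setIntegral_const, measureReal_def, Real.volume_Ioc, smul_eq_mul,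
            ENNReal.toReal_ofReal (by linarith)]
          ring
  have hsumInt : Summable (fun p : ℕ × ℕ =>
      ∫ s in Set.Ioc (0:ℝ) (2 * Real.pi), ‖FA p s + FB p s‖) := by
    refine Summable.of_nonneg_of_le (fun p => integral_nonneg fun s => norm_nonneg _)
      (fun p => hbound p) ?_
    exact (((hA.mul_right ‖x₀‖)).add ((hB.mul_right (‖c‖ / ‖x₀‖)))).mul_right (2 * Real.pi)
  have step2 : (∫ s in Set.Ioc (0:ℝ) (2 * Real.pi), ∑' p : ℕ × ℕ, (FA p s + FB p s)) =
      ∑' p : ℕ × ℕ, ∫ s in Set.Ioc (0:ℝ) (2 * Real.pi), (FA p s + FB p s) :=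
    (integral_tsum_of_summable_integral_norm (fun p => hIntOn p) hsumInt).symm
  -- step 3 : compute each integral
  have hip : ∀ p : ℕ × ℕ, (∫ s in Set.Ioc (0:ℝ) (2 * Real.pi), (FA p s + FB p s)) =
      (if p.2 = p.1 + 1 then (2 * Real.pi : ℂ) * (Complex.I * (A p.1 p.2 * c ^ p.2)) else 0) +
      (if p.1 = p.2 + 1 then -((2 * Real.pi : ℂ) * (Complex.I * (B p.1 p.2 * c ^ p.1))) else 0)
      := by
    intro p
    obtain ⟨k, l⟩ := p
    have hfa : ∀ s : ℝ, FA (k, l) s =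
        (A k l * x₀ ^ k * (c * x₀⁻¹) ^ l * (Complex.I * x₀)) *
          Complex.exp ((((k : ℤ) - l + 1) : ℤ) * (Complex.I * s)) := by
      intro s
      have hu : Complex.exp (Complex.I * s) ≠ 0 := Complex.exp_ne_zero _
      rw [Complex.exp_int_mul]
      simp only [hFA]
      rw [show ((k : ℤ) - l + 1) = ((k + 1 : ℕ) : ℤ) - (l : ℤ) from by push_cast; ring,
        zpow_sub₀ hu, zpow_natCast, zpow_natCast, Complex.exp_neg]
      simp only [mul_pow, inv_pow]
      field_simp
      ring
    have hfb : ∀ s : ℝ, FB (k, l) s =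
        (B k l * x₀ ^ k * (c * x₀⁻¹) ^ l * (-(Complex.I * c * x₀⁻¹))) *
          Complex.exp ((((k : ℤ) - l - 1) : ℤ) * (Complex.I * s)) := by
      intro s
      have hu : Complex.exp (Complex.I * s) ≠ 0 := Complex.exp_ne_zero _
      rw [Complex.exp_int_mul]
      simp only [hFB]
      rw [show ((k : ℤ) - l - 1) = ((k : ℕ) : ℤ) - ((l + 1 : ℕ) : ℤ) from by push_cast; ring,
        zpow_sub₀ hu, zpow_natCast, zpow_natCast, Complex.exp_neg]
      simp only [mul_pow, inv_pow]
      field_simp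
      ring
    rw [← intervalIntegral.integral_of_le h2pi]
    rw [intervalIntegral.integral_add ((hcontA (k, l)).intervalIntegrable _ _)
      ((hcontB (k, l)).intervalIntegrable _ _)]
    simp_rw [hfa, hfb]
    rw [intervalIntegral.integral_const_mul, intervalIntegral.integral_const_mul,
      integral_cexp_int, integral_cexp_int]
    have e1 : ((k : ℤ) - l + 1 = 0) ↔ l = k + 1 := by omega
    have e2 : ((k : ℤ) - l - 1 = 0) ↔ k = l + 1 := by omega
    simp only [e1, e2]
    congr 1
    · by_cases h : l = k + 1
      · subst h
        rw [if_pos rfl, if_pos rfl]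
        simp only [mul_pow, inv_pow]
        field_simp
        ring
      · rw [if_neg h, if_neg h, mul_zero]
    · by_cases h : k = l + 1
      · subst h
        rw [if_pos rfl, if_pos rfl]
        simp only [mul_pow, inv_pow]
        field_simp
        ring
      · rw [if_neg h, if_neg h, mul_zero]
  -- step 4 : evaluate the remaining sum
  set gA : ℕ × ℕ → ℂ := fun p =>
    if p.2 = p.1 + 1 then (2 * Real.pi : ℂ) * (Complex.I * (A p.1 p.2 * c ^ p.2)) else 0
    with hgA
  set gB : ℕ × ℕ → ℂ := fun p =>
    if p.1 = p.2 + 1 then -((2 * Real.pi : ℂ) * (Complex.I * (B p.1 p.2 * c ^ p.1))) else 0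
    with hgB
  have hgAc : ∀ k : ℕ, gA (k, k + 1) = (2 * Real.pi : ℂ) * Complex.I * (A k (k + 1) * c ^ (k + 1)) := by
    intro k; simp only [hgA, if_pos rfl]; ring
  have hgBc : ∀ k : ℕ, gB (k + 1, k) = -((2 * Real.pi : ℂ) * Complex.I * (B (k + 1) k * c ^ (k + 1))) := by
    intro k; simp only [hgB, if_pos rfl]; ring
  have hgA0 : ∀ p : ℕ × ℕ, p ∉ Set.range (fun k : ℕ => ((k, k + 1) : ℕ × ℕ)) → gA p = 0 := by
    intro p hp
    have h : ¬ (p.2 = p.1 + 1) := fun h => hp ⟨p.1, Prod.ext rfl h.symm⟩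
    simp only [hgA, if_neg h]
  have hgB0 : ∀ p : ℕ × ℕ, p ∉ Set.range (fun k : ℕ => ((k + 1, k) : ℕ × ℕ)) → gB p = 0 := by
    intro p hp
    have h : ¬ (p.1 = p.2 + 1) := fun h => hp ⟨p.2, Prod.ext h.symm rfl⟩
    simp only [hgB, if_neg h]
  have hSgA : Summable gA := by
    rw [← Function.Injective.summable_iff diag_injective hgA0]
    refine Summable.congr ?_ fun k => (hgAc k).symm
    exact ((diagSummable A c (diagSummableNorm A x₀ c hx₀ hA)).mul_left _)
  have hSgB : Summable gB := by
    rw [← Function.Injective.summable_iff diag_injective' hgB0]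
    refine Summable.congr ?_ fun k => (hgBc k).symm
    exact ((diagSummable' B c (diagSummableNorm' B x₀ c hx₀ hB)).mul_left _).neg
  have htA : ∑' p : ℕ × ℕ, gA p =
      (2 * Real.pi : ℂ) * Complex.I * ∑' k : ℕ, A k (k + 1) * c ^ (k + 1) := by
    rw [← Function.Injective.tsum_eq diag_injective (Function.support_subset_iff'.mpr hgA0),
      ← tsum_mul_left]
    exact tsum_congr fun k => hgAc k
  have htB : ∑' p : ℕ × ℕ, gB p =
      -((2 * Real.pi : ℂ) * Complex.I * ∑' k : ℕ, B (k + 1) k * c ^ (k + 1)) := by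
    rw [← Function.Injective.tsum_eq diag_injective' (Function.support_subset_iff'.mpr hgB0),
      ← tsum_mul_left, ← tsum_neg]
    exact tsum_congr fun k => hgBc k
  calc period8 A B x₀ c = ∑' p : ℕ × ℕ, (gA p + gB p) := by
        rw [step1, step2]
        exact tsum_congr fun p => hip p
    _ = (∑' p : ℕ × ℕ, gA p) + ∑' p : ℕ × ℕ, gB p := Summable.tsum_add hSgA hSgB
    _ = _ := by rw [htA, htB]; ring

theorem stmt_8 (A B : ℕ → ℕ → ℂ) (x₀ : ℂ) (hx₀ : x₀ ≠ 0) (ε : ℝ) (hε : 0 < ε)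
    (hA : ∀ c : ℂ, ‖c‖ < ε →
      Summable (fun p : ℕ × ℕ => ‖A p.1 p.2‖ * ‖x₀‖ ^ p.1 * (‖c‖ / ‖x₀‖) ^ p.2))
    (hB : ∀ c : ℂ, ‖c‖ < ε →
      Summable (fun p : ℕ × ℕ => ‖B p.1 p.2‖ * ‖x₀‖ ^ p.1 * (‖c‖ / ‖x₀‖) ^ p.2)) :
    (∀ c : ℂ, c ≠ 0 → ‖c‖ < ε →
        period8 A B x₀ c =
          2 * Real.pi * Complex.I *
            ∑' k : ℕ, (A k (k + 1) - B (k + 1) k) * c ^ (k + 1)) ∧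
      ((∀ c : ℂ, c ≠ 0 → ‖c‖ < ε → period8 A B x₀ c = 0) ↔
        ∀ k : ℕ, A k (k + 1) = B (k + 1) k) := by
  have part1 : ∀ c : ℂ, c ≠ 0 → ‖c‖ < ε →
      period8 A B x₀ c =
        2 * Real.pi * Complex.I * ∑' k : ℕ, (A k (k + 1) - B (k + 1) k) * c ^ (k + 1) := by
    intro c hc0 hcε
    rw [periodEq A B x₀ c hx₀ (hA c hcε) (hB c hcε)]
    congr 1
    rw [← Summable.tsum_sub (diagSummable A c (diagSummableNorm A x₀ c hx₀ (hA c hcε)))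
      (diagSummable' B c (diagSummableNorm' B x₀ c hx₀ (hB c hcε)))]
    exact tsum_congr fun k => (sub_mul _ _ _).symm
  refine ⟨part1, ?_, ?_⟩
  · intro h0
    have h2piI : (2 * (Real.pi : ℂ) * Complex.I) ≠ 0 :=
      mul_ne_zero (mul_ne_zero two_ne_zero (Complex.ofReal_ne_zero.mpr Real.pi_ne_zero))
        Complex.I_ne_zero
    have hs : ∀ c : ℂ, ‖c‖ < ε →
        Summable (fun k => ‖A k (k + 1) - B (k + 1) k‖ * ‖c‖ ^ (k + 1)) := by
      intro c hcε
      refine Summable.of_nonneg_of_le (fun k => by positivity) (fun k => ?_)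
        (((diagSummableNorm A x₀ c hx₀ (hA c hcε)).add
          (diagSummableNorm' B x₀ c hx₀ (hB c hcε))).congr fun k => (add_mul _ _ _).symm)
      exact mul_le_mul_of_nonneg_right (norm_sub_le _ _) (pow_nonneg (norm_nonneg c) _)
    have hz : ∀ c : ℂ, c ≠ 0 → ‖c‖ < ε →
        ∑' k : ℕ, (A k (k + 1) - B (k + 1) k) * c ^ (k + 1) = 0 := by
      intro c hc0 hcε
      have h := (part1 c hc0 hcε).symm.trans (h0 c hc0 hcε)
      rcases mul_eq_zero.mp h with h | h
      · exact absurd h h2piI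
      · exact h
    intro k
    exact sub_eq_zero.mp (coeff_zero_of_tsum_zero _ ε hε hs hz k)
  · intro hAB c hc0 hcε
    rw [part1 c hc0 hcε]
    have hterm : ∀ k : ℕ, (A k (k + 1) - B (k + 1) k) * c ^ (k + 1) = 0 := fun k => by
      rw [sub_eq_zero.mpr (hAB k), zero_mul]
    rw [tsum_congr hterm, tsum_zero, mul_zero]
end

section
/- Division lemma in dimension two: if η is a holomorphic one-form germ at 0 ∈ ℂ² satisfying η ∧ d(xy) = 0, then there exists a holomorphic function germ a at 0 ∈ ℂ² such that η = a · d(xy). -/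
/-!
Evaluating `A x = B y` on the axes shows that `A` vanishes on `{y = 0}`. Then every homogeneous
term of the power series of `A` at `0` is `y` times a form of one degree less, whose norm is at
most linear in the degree times that of the term, so these quotients form a series with the same
radius; its sum `a` satisfies `A = a y`. Finally `B y = A x = a x y`, and `B = a x` follows by
continuity because `{y ≠ 0}` is dense.
-/

open Filter
open scoped Topology ENNReal

namespace ContinuousMultilinearMap

variable {𝕜 F : Type*} [NontriviallyNormedField 𝕜] [NormedAddCommGroup F] [NormedSpace 𝕜 F]

/-- Splitting the first argument as `z = z₁ e₁ + z₂ e₂`, the `e₂`-part is divisible by `z₂` at once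
and the `e₁`-part is treated recursively. -/
noncomputable def divSnd :
    {m : ℕ} → ContinuousMultilinearMap 𝕜 (fun _ : Fin (m + 1) => 𝕜 × 𝕜) F →
      ContinuousMultilinearMap 𝕜 (fun _ : Fin m => 𝕜 × 𝕜) F
  | 0, q => q.curryLeft (0, 1)
  | _ + 1, q => q.curryLeft (0, 1) +
      ((ContinuousLinearMap.fst 𝕜 𝕜 𝕜).smulRight (divSnd (q.curryLeft (1, 0)))).uncurryLeft

lemma apply_const_eq_curryLeft_add {m : ℕ}
    (q : ContinuousMultilinearMap 𝕜 (fun _ : Fin (m + 1) => 𝕜 × 𝕜) F) (z : 𝕜 × 𝕜) :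
    q (fun _ => z) =
      z.1 • q.curryLeft (1, 0) (fun _ => z) + z.2 • q.curryLeft (0, 1) (fun _ => z) := by
  have hz : z = z.1 • ((1 : 𝕜), (0 : 𝕜)) + z.2 • ((0 : 𝕜), (1 : 𝕜)) := by ext <;> simp
  have hcons : (fun _ : Fin (m + 1) => z) = Fin.cons z (fun _ => z) := by
    ext i : 1
    cases i using Fin.cases <;> rfl
  rw [hcons, ← curryLeft_apply, hz, map_add, map_smul, map_smul]
  simp only [Prod.smul_mk, smul_eq_mul, mul_one, mul_zero, Prod.mk_add_mk, add_zero, zero_add]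
  rfl

theorem apply_const_eq_snd_smul_divSnd {m : ℕ}
    (q : ContinuousMultilinearMap 𝕜 (fun _ : Fin (m + 1) => 𝕜 × 𝕜) F) (z : 𝕜 × 𝕜) :
    q (fun _ => z) = z.2 • q.divSnd (fun _ => z) + q (fun _ => (z.1, 0)) := by
  have hfst : ∀ {n : ℕ} (r : ContinuousMultilinearMap 𝕜 (fun _ : Fin (n + 1) => 𝕜 × 𝕜) F),
      r (fun _ => (z.1, 0)) = z.1 • r.curryLeft (1, 0) (fun _ => (z.1, 0)) := fun r => by
    simp [apply_const_eq_curryLeft_add r (z.1, 0)]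
  induction m with
  | zero =>
    rw [apply_const_eq_curryLeft_add, hfst,
      Subsingleton.elim (fun _ : Fin 0 => (z.1, (0 : 𝕜))) (fun _ => z)]
    simp [divSnd, add_comm]
  | succ m ih =>
    rw [apply_const_eq_curryLeft_add, hfst, ih (q.curryLeft (1, 0))]
    simp only [divSnd, add_apply, ContinuousLinearMap.uncurryLeft_apply, Fin.tail_def,
      ContinuousLinearMap.smulRight_apply, ContinuousLinearMap.coe_fst', smul_apply, smul_add]
    rw [smul_comm z.1 z.2]
    abel

theorem norm_divSnd_le {m : ℕ}
    (q : ContinuousMultilinearMap 𝕜 (fun _ : Fin (m + 1) => 𝕜 × 𝕜) F) :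
    ‖q.divSnd‖ ≤ (m + 1) * ‖q‖ := by
  have hcurry : ∀ {n : ℕ} (r : ContinuousMultilinearMap 𝕜 (fun _ : Fin (n + 1) => 𝕜 × 𝕜) F)
      (v : 𝕜 × 𝕜), ‖v‖ = 1 → ‖r.curryLeft v‖ ≤ ‖r‖ := fun r v hv => by
    simpa [hv] using (r.curryLeft).le_opNorm v
  induction m with
  | zero => simpa [divSnd] using hcurry q (0, 1) (by simp)
  | succ m ih =>
    calc ‖q.divSnd‖ ≤ ‖q‖ + (m + 1) * ‖q‖ := by
          refine (norm_add_le _ _).trans (add_le_add (hcurry q (0, 1) (by simp)) ?_)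
          rw [ContinuousLinearMap.uncurryLeft_norm, ContinuousLinearMap.norm_smulRight_apply]
          refine (mul_le_of_le_one_left (norm_nonneg _)
            (ContinuousLinearMap.norm_fst_le ..)).trans ?_
          exact (ih _).trans (mul_le_mul_of_nonneg_left (hcurry q (1, 0) (by simp)) (by positivity))
      _ = (↑(m + 1) + 1) * ‖q‖ := by push_cast; ring

end ContinuousMultilinearMap

namespace FormalMultilinearSeries

variable {𝕜 F : Type*} [NontriviallyNormedField 𝕜] [NormedAddCommGroup F] [NormedSpace 𝕜 F]

noncomputable def divSnd (p : FormalMultilinearSeries 𝕜 (𝕜 × 𝕜) F) :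
    FormalMultilinearSeries 𝕜 (𝕜 × 𝕜) F :=
  fun m => (p (m + 1)).divSnd

theorem radius_le_radius_divSnd (p : FormalMultilinearSeries 𝕜 (𝕜 × 𝕜) F) :
    p.radius ≤ p.divSnd.radius := by
  refine ENNReal.le_of_forall_nnreal_lt fun r hr => ?_
  rcases eq_zero_or_pos r with rfl | hr0
  · simp
  obtain ⟨a, ⟨ha0, ha1⟩, C, hC, hp⟩ := p.norm_mul_pow_le_mul_pow_of_lt_radius hr
  have hlim : Tendsto (fun n : ℕ => ((n : ℝ) + 1) * a ^ (n + 1)) atTop (𝓝 0) := by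
    refine ((tendsto_self_mul_const_pow_of_lt_one ha0.le ha1).comp
      (tendsto_add_atTop_nat 1)).congr fun n => ?_
    simp
  refine p.divSnd.le_radius_of_eventually_le (C / r) ?_
  filter_upwards [hlim.eventually (ge_mem_nhds one_pos)] with n hn
  have hr0' : (0 : ℝ) < r := hr0
  calc ‖p.divSnd n‖ * r ^ n ≤ (n + 1) * ‖p (n + 1)‖ * r ^ n := by
        gcongr; exact ContinuousMultilinearMap.norm_divSnd_le _
    _ = (n + 1) * (‖p (n + 1)‖ * r ^ (n + 1)) / r := by field_simp; ring
    _ ≤ (n + 1) * (C * a ^ (n + 1)) / r := by gcongr _ * ?_ / _; exact hp _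
    _ = C * ((n + 1) * a ^ (n + 1)) / r := by ring
    _ ≤ C / r := by gcongr; exact mul_le_of_le_one_right hC.le hn

end FormalMultilinearSeries

section Division

variable {𝕜 F : Type*} [NontriviallyNormedField 𝕜] [NormedAddCommGroup F] [NormedSpace 𝕜 F]
  [CompleteSpace F]

theorem HasFPowerSeriesOnBall.apply_eq_snd_smul_sum_divSnd {f : 𝕜 × 𝕜 → F}
    {p : FormalMultilinearSeries 𝕜 (𝕜 × 𝕜) F} {r : ℝ≥0∞} (hf : HasFPowerSeriesOnBall f p 0 r)
    (hfst : ∀ n x, p n (fun _ => (x, 0)) = 0) {z : 𝕜 × 𝕜} (hz : z ∈ Metric.eball 0 r) :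
    f z = z.2 • p.divSnd.sum z := by
  have hterm : ∀ m, p (m + 1) (fun _ => z) = z.2 • p.divSnd m (fun _ => z) := fun m => by
    rw [(p (m + 1)).apply_const_eq_snd_smul_divSnd, hfst, add_zero]
    rfl
  have hzero : p 0 (fun _ => z) = 0 := by
    rw [Subsingleton.elim (fun _ : Fin 0 => z) (fun _ => (z.1, 0))]
    exact hfst 0 z.1
  have hsum := (hasSum_nat_add_iff' 1).2 (by simpa using hf.hasSum hz)
  simp only [Finset.range_one, Finset.sum_singleton, hzero, sub_zero, hterm] at hsum
  exact hsum.unique ((p.divSnd.hasSum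
    (lt_of_lt_of_le hz (hf.r_le.trans p.radius_le_radius_divSnd))).const_smul z.2)

theorem AnalyticAt.exists_eq_snd_smul {f : 𝕜 × 𝕜 → F} (hf : AnalyticAt 𝕜 f 0)
    (h0 : ∀ᶠ x in 𝓝 0, f (x, 0) = 0) :
    ∃ g : 𝕜 × 𝕜 → F, AnalyticAt 𝕜 g 0 ∧ ∀ᶠ z in 𝓝 0, f z = z.2 • g z := by
  obtain ⟨p, r, hp⟩ := hf
  have hfst : ∀ n x, p n (fun _ => (x, 0)) = 0 := by
    have hinl := (hp.hasFPowerSeriesAt (x := 0)).compContinuousLinearMap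
      (u := ContinuousLinearMap.inl 𝕜 𝕜 𝕜) (x := 0)
    exact fun n x => (hinl.congr h0).apply_eq_zero n x
  have hrad : 0 < p.divSnd.radius := hp.radius_pos.trans_le p.radius_le_radius_divSnd
  refine ⟨p.divSnd.sum, (p.divSnd.hasFPowerSeriesOnBall hrad).analyticAt, ?_⟩
  filter_upwards [Metric.eball_mem_nhds 0 hp.r_pos] with z hz
  exact hp.apply_eq_snd_smul_sum_divSnd hfst hz

end Division

theorem Dense.eventuallyEq_of_continuousAt {X Y : Type*} [TopologicalSpace X]
    [TopologicalSpace Y] [T2Space Y] {D : Set X} (hD : Dense D) {f g : X → Y} {x₀ : X}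
    (hf : ∀ᶠ x in 𝓝 x₀, ContinuousAt f x) (hg : ∀ᶠ x in 𝓝 x₀, ContinuousAt g x)
    (hfg : ∀ᶠ x in 𝓝 x₀, x ∈ D → f x = g x) : f =ᶠ[𝓝 x₀] g := by
  obtain ⟨W, hW, hWo, hx₀⟩ := eventually_nhds_iff.1 (hf.and (hg.and hfg))
  have hEq : Set.EqOn f g W :=
    Set.EqOn.of_subset_closure (fun x hx => (hW x hx.1).2.2 hx.2)
      (fun x hx => (hW x hx).1.continuousWithinAt) (fun x hx => (hW x hx).2.1.continuousWithinAt)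
      Set.inter_subset_left (hD.open_subset_closure_inter hWo)
  exact eventually_of_mem (hWo.mem_nhds hx₀) hEq

/-- Division lemma: if `η = A dx + B dy` is a holomorphic one-form germ at `0 ∈ ℂ²`
with `η ∧ d(xy) = 0` (i.e. `A x - B y = 0`), then `η = a · d(xy)` for some
holomorphic germ `a`, i.e. `A = a y` and `B = a x` near `0`. -/
theorem stmt_9 (A B : ℂ × ℂ → ℂ) (U : Set (ℂ × ℂ)) (hU : U ∈ nhds (0 : ℂ × ℂ))
    (hA : AnalyticOnNhd ℂ A U) (hB : AnalyticOnNhd ℂ B U)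
    (hwedge : ∀ p ∈ U, A p * p.1 - B p * p.2 = 0) :
    ∃ (V : Set (ℂ × ℂ)) (a : ℂ × ℂ → ℂ), V ∈ nhds (0 : ℂ × ℂ) ∧ V ⊆ U ∧
      AnalyticOnNhd ℂ a V ∧ ∀ p ∈ V, A p = a p * p.2 ∧ B p = a p * p.1 := by
  have hxaxis : Tendsto (fun x : ℂ => (x, (0 : ℂ))) (𝓝 0) (𝓝 0) :=
    (continuous_id.prodMk continuous_const).tendsto' 0 0 rfl
  have hA_axis : ∀ᶠ x : ℂ in 𝓝 0, A (x, 0) = 0 := by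
    refine (dense_compl_singleton (0 : ℂ)).eventuallyEq_of_continuousAt (g := 0) ?_
      (.of_forall fun _ => continuousAt_const) ?_
    · filter_upwards [hxaxis.eventually hU] with x hx
      exact ContinuousAt.comp (f := fun x : ℂ => (x, (0 : ℂ))) (hA _ hx).continuousAt (by fun_prop)
    · filter_upwards [hxaxis.eventually hU] with x hx hx0
      have h : A (x, 0) = 0 ∨ x = 0 := by simpa using hwedge _ hx
      exact h.resolve_right hx0
  obtain ⟨a, ha, hAa⟩ := (hA 0 (mem_of_mem_nhds hU)).exists_eq_snd_smul hA_axis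
  have hBa : B =ᶠ[𝓝 0] fun z => a z * z.1 := by
    refine (dense_univ.prod (dense_compl_singleton (0 : ℂ))).eventuallyEq_of_continuousAt ?_ ?_ ?_
    · filter_upwards [hU] with z hz using (hB z hz).continuousAt
    · filter_upwards [ha.eventually_analyticAt] with z hz using hz.continuousAt.mul continuousAt_fst
    · filter_upwards [hU, hAa] with z hzU hzA hzD
      have hz2 : z.2 ≠ 0 := hzD.2
      rw [smul_eq_mul] at hzA
      exact mul_right_cancel₀ hz2 (by linear_combination -(hwedge z hzU) + z.1 * hzA)
  refine ⟨{z ∈ U | AnalyticAt ℂ a z ∧ A z = a z * z.2 ∧ B z = a z * z.1}, a, ?_,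
    fun z hz => hz.1, fun z hz => hz.2.1, fun z hz => hz.2.2⟩
  filter_upwards [hU, ha.eventually_analyticAt, hAa, hBa] with z hzU hza hzA hzB
  exact ⟨hzU, hza, hzA.trans (mul_comm _ _), hzB⟩
end
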